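/- Mutation is invertible: if Q = mut_{(ω,F)}(P) is a mutation of the Fano polygon P with respect to the primitive normal ω and factor F, then P = mut_{(-ω,F)}(Q), i.e. Q admits a mutation with respect to -ω and factor F whose result is P. -/

import Mathlib

open Pointwise

/-- Embedding of the lattice `N = ℤ²` into `N_ℝ = ℝ²`. -/
def emb (v : ℤ × ℤ) : ℝ × ℝ := ((v.1 : ℝ), (v.2 : ℝ))

/-- The set of lattice points of `ℝ²`. -/
def latticePts : Set (ℝ × ℝ) := Set.range emb

/-- A lattice vector is primitive if its coordinates are coprime. -/
def IsPrimitive (v : ℤ × ℤ) : Prop := Int.gcd v.1 v.2 = 1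

/-- The pairing of `ω ∈ M = ℤ²` with a point of `ℝ²`. -/
def pairing (ω : ℤ × ℤ) (x : ℝ × ℝ) : ℝ := ω.1 * x.1 + ω.2 * x.2

/-- A lattice polytope: the convex hull of finitely many lattice points. -/
def IsLatticePolytope (S : Set (ℝ × ℝ)) : Prop :=
  ∃ V : Finset (ℤ × ℤ), S = convexHull ℝ (emb '' ↑V)

/-- A Fano polygon: a lattice polytope with `0` in its interior (hence full-dimensional)
whose vertices are all primitive lattice vectors. -/
def IsFanoPolygon (P : Set (ℝ × ℝ)) : Prop :=
  IsLatticePolytope P ∧ (0 : ℝ × ℝ) ∈ interior P ∧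
    ∀ x ∈ Set.extremePoints ℝ P, ∃ v : ℤ × ℤ, IsPrimitive v ∧ x = emb v

/-- The segment from the origin to `w`. -/
def seg (w : ℝ × ℝ) : Set (ℝ × ℝ) := convexHull ℝ {0, w}

/-- `ω_h(P)`: the convex hull of the lattice points of `P` at level `h` w.r.t. `ω`. -/
def levelHull (P : Set (ℝ × ℝ)) (ω : ℤ × ℤ) (h : ℤ) : Set (ℝ × ℝ) :=
  convexHull ℝ {x | x ∈ P ∧ x ∈ latticePts ∧ pairing ω x = (h : ℝ)}

/-- Valid data for a mutation of `P`: a primitive `ω`, a primitive `vE` with `ω(vE) = 0`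
(so that the factor is `F = conv{0, vE}`), and lattice polytopes `G h` for `h < 0` with
`{vertices of P at level h} ⊆ G h + |h| F ⊆ ω_h(P)`. -/
def IsMutationData (ω vE : ℤ × ℤ) (G : ℤ → Set (ℝ × ℝ)) (P : Set (ℝ × ℝ)) : Prop :=
  IsPrimitive ω ∧ IsPrimitive vE ∧ ω.1 * vE.1 + ω.2 * vE.2 = 0 ∧
    ∀ h : ℤ, h < 0 → IsLatticePolytope (G h) ∧
      {x ∈ Set.extremePoints ℝ P | pairing ω x = (h : ℝ)} ⊆ G h + seg ((|h| : ℝ) • emb vE) ∧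
      G h + seg ((|h| : ℝ) • emb vE) ⊆ levelHull P ω h

/-- The mutation `mut_{(ω,F)}(P)` determined by the data `(ω, vE, G)`. -/
def mutation (ω vE : ℤ × ℤ) (G : ℤ → Set (ℝ × ℝ)) (P : Set (ℝ × ℝ)) : Set (ℝ × ℝ) :=
  convexHull ℝ ((⋃ (h : ℤ) (_ : h < 0), G h) ∪
    (⋃ (h : ℤ) (_ : 0 ≤ h), levelHull P ω h + seg ((h : ℝ) • emb vE)))

/-- `Q` is a mutation of `P`. -/
def IsMutationOf (Q P : Set (ℝ × ℝ)) : Prop :=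
  ∃ ω vE G, IsMutationData ω vE G P ∧ Q = mutation ω vE G P

/-- `GL₂(ℤ)`-equivalence of subsets of `ℝ²`. -/
def UnimodularEquiv (P Q : Set (ℝ × ℝ)) : Prop :=
  ∃ a b c d : ℤ, (a * d - b * c = 1 ∨ a * d - b * c = -1) ∧
    Q = (fun x : ℝ × ℝ => ((a : ℝ) * x.1 + (b : ℝ) * x.2, (c : ℝ) * x.1 + (d : ℝ) * x.2)) '' P

/-- One step of mutation-equivalence: a `GL₂(ℤ)`-transformation or a mutation. -/
def MutationStep (P Q : Set (ℝ × ℝ)) : Prop := UnimodularEquiv P Q ∨ IsMutationOf Q P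

/-- Mutation-equivalence: a finite chain of mutations and `GL₂(ℤ)`-transformations. -/
def MutationEquiv : Set (ℝ × ℝ) → Set (ℝ × ℝ) → Prop := Relation.ReflTransGen MutationStep

/-- The face of `P` on which `pairing ω` is minimal (the edge of `P` with inner normal `ω`
when this face is one-dimensional). -/
def edgeOf (P : Set (ℝ × ℝ)) (ω : ℤ × ℤ) : Set (ℝ × ℝ) :=
  {x ∈ P | ∀ y ∈ P, pairing ω x ≤ pairing ω y}

/-- `ω` is the primitive inner normal of an edge of `P`. -/
def IsEdgeNormal (P : Set (ℝ × ℝ)) (ω : ℤ × ℤ) : Prop :=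
  IsPrimitive ω ∧ ∃ x ∈ edgeOf P ω, ∃ y ∈ edgeOf P ω, x ≠ y

/-- The lattice height of the edge of `P` with inner normal `ω`. -/
noncomputable def edgeHeight (P : Set (ℝ × ℝ)) (ω : ℤ × ℤ) : ℤ :=
  sSup {r : ℤ | ∀ x ∈ P, (-r : ℝ) ≤ pairing ω x}

/-- The number of lattice points on the edge of `P` with inner normal `ω`. -/
noncomputable def edgeLatticeCount (P : Set (ℝ × ℝ)) (ω : ℤ × ℤ) : ℕ :=
  {v : ℤ × ℤ | emb v ∈ edgeOf P ω}.ncard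

/-- The lattice length of the edge of `P` with inner normal `ω`. -/
noncomputable def edgeLength (P : Set (ℝ × ℝ)) (ω : ℤ × ℤ) : ℤ :=
  (edgeLatticeCount P ω : ℤ) - 1

/-- The total number of primitive T-cones of `P`: an edge of lattice length `l` and lattice
height `h` contributes `l / h` primitive T-cones. -/
noncomputable def numTCones (P : Set (ℝ × ℝ)) : ℕ :=
  {p : (ℤ × ℤ) × ℕ | IsEdgeNormal P p.1 ∧
    (p.2 : ℤ) < edgeLength P p.1 / edgeHeight P p.1}.ncard

/-- The number of edges of `P` whose residual R-cone has lattice length `l` and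
lattice height `h`. -/
noncomputable def numRes (P : Set (ℝ × ℝ)) (l h : ℤ) : ℕ :=
  {ω : ℤ × ℤ | IsEdgeNormal P ω ∧ edgeHeight P ω = h ∧
    edgeLength P ω % edgeHeight P ω = l}.ncard

/-- Every residual R-cone of `P` has its (lattice length, lattice height) in `S`. -/
def BasketIn (P : Set (ℝ × ℝ)) (S : Set (ℤ × ℤ)) : Prop :=
  ∀ ω : ℤ × ℤ, IsEdgeNormal P ω →
    edgeLength P ω % edgeHeight P ω = 0 ∨
      (edgeLength P ω % edgeHeight P ω, edgeHeight P ω) ∈ S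

/-- The number of lattice points on the boundary of `P`. -/
noncomputable def boundaryLatticeCount (P : Set (ℝ × ℝ)) : ℕ :=
  {v : ℤ × ℤ | emb v ∈ frontier P}.ncard

/-- A Fano polygon is minimal if no mutation of it has fewer boundary lattice points. -/
def IsMinimalPolygon (P : Set (ℝ × ℝ)) : Prop :=
  ∀ Q : Set (ℝ × ℝ), IsMutationOf Q P → boundaryLatticeCount P ≤ boundaryLatticeCount Q

/-- The maximal lattice height `m_P` of an edge of `P`. -/
noncomputable def maxLocalIndex (P : Set (ℝ × ℝ)) : ℤ :=
  sSup {h : ℤ | ∃ ω, IsEdgeNormal P ω ∧ edgeHeight P ω = h}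

/-- The sum of the vertices of `P`. -/
noncomputable def vertexSum (P : Set (ℝ × ℝ)) : ℝ × ℝ :=
  ∑ᶠ x ∈ Set.extremePoints ℝ P, x

/-- `ω` is the inner normal of a special facet of `P`: the sum of the vertices of `P`
lies in the cone `ℝ_{≥0} E` spanned by the corresponding edge `E`. -/
def IsSpecialFacet (P : Set (ℝ × ℝ)) (ω : ℤ × ℤ) : Prop :=
  IsEdgeNormal P ω ∧ ∃ (c : ℝ) (x : ℝ × ℝ), 0 ≤ c ∧ x ∈ edgeOf P ω ∧ vertexSum P = c • x

/-- The convex hull of a list of lattice points. -/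
def poly (V : List (ℤ × ℤ)) : Set (ℝ × ℝ) := convexHull ℝ (emb '' {v | v ∈ V})

/-! ### Auxiliary lemmas -/

section Aux

lemma pairing_add (ω : ℤ × ℤ) (x y : ℝ × ℝ) :
    pairing ω (x + y) = pairing ω x + pairing ω y := by
  simp only [pairing, Prod.fst_add, Prod.snd_add]; ring

lemma pairing_smul (ω : ℤ × ℤ) (c : ℝ) (x : ℝ × ℝ) :
    pairing ω (c • x) = c * pairing ω x := by
  simp only [pairing, Prod.smul_fst, Prod.smul_snd, smul_eq_mul]; ring

lemma pairing_neg (ω : ℤ × ℤ) (x : ℝ × ℝ) : pairing (-ω) x = -(pairing ω x) := by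
  simp only [pairing, Prod.fst_neg, Prod.snd_neg, Int.cast_neg]; ring

lemma convex_level (ω : ℤ × ℤ) (c : ℝ) : Convex ℝ {x : ℝ × ℝ | pairing ω x = c} := by
  intro x hx y hy a b ha hb hab
  simp only [Set.mem_setOf_eq] at *
  rw [pairing_add, pairing_smul, pairing_smul, hx, hy, ← add_mul, hab, one_mul]

lemma levelHull_subset {P : Set (ℝ × ℝ)} (hP : Convex ℝ P) (ω : ℤ × ℤ) (h : ℤ) :
    levelHull P ω h ⊆ P :=
  convexHull_min (fun _ hx => hx.1) hP

lemma levelHull_level (P : Set (ℝ × ℝ)) (ω : ℤ × ℤ) (h : ℤ) :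
    levelHull P ω h ⊆ {x : ℝ × ℝ | pairing ω x = (h : ℝ)} :=
  convexHull_min (fun _ hx => hx.2.2) (convex_level ω h)

lemma zero_mem_seg (w : ℝ × ℝ) : (0 : ℝ × ℝ) ∈ seg w :=
  subset_convexHull ℝ _ (Set.mem_insert _ _)

lemma self_mem_seg (w : ℝ × ℝ) : w ∈ seg w :=
  subset_convexHull ℝ _ (Set.mem_insert_of_mem _ rfl)

lemma exists_of_mem_seg {c : ℝ} (hc : 0 ≤ c) (v : ℝ × ℝ) {u : ℝ × ℝ}
    (hu : u ∈ seg (c • v)) : ∃ t : ℝ, 0 ≤ t ∧ t ≤ c ∧ u = t • v := by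
  rw [seg, convexHull_pair, segment_eq_image'] at hu
  obtain ⟨θ, ⟨hθ0, hθ1⟩, rfl⟩ := hu
  refine ⟨θ * c, mul_nonneg hθ0 hc, ?_, ?_⟩
  · calc θ * c ≤ 1 * c := mul_le_mul_of_nonneg_right hθ1 hc
    _ = c := one_mul c
  · simp [smul_smul]

lemma mem_seg_of (v : ℝ × ℝ) {s c : ℝ} (h0 : 0 ≤ s) (hsc : s ≤ c) :
    s • v ∈ seg (c • v) := by
  rw [seg, convexHull_pair, segment_eq_image']
  rcases eq_or_lt_of_le (h0.trans hsc) with hc | hc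
  · have hs : s = 0 := le_antisymm (hsc.trans_eq hc.symm) h0
    exact ⟨0, ⟨le_refl 0, zero_le_one⟩, by simp [hs]⟩
  · refine ⟨s / c, ⟨div_nonneg h0 hc.le, div_le_one_of_le₀ hsc hc.le⟩, ?_⟩
    simp only [zero_add, sub_zero, smul_smul]
    rw [div_mul_cancel₀ s hc.ne']

lemma lattice_add_smul {x : ℝ × ℝ} (hx : x ∈ latticePts) (c : ℤ) (v : ℤ × ℤ) :
    x + (c : ℝ) • emb v ∈ latticePts := by
  obtain ⟨u, rfl⟩ := hx
  refine ⟨(u.1 + c * v.1, u.2 + c * v.2), ?_⟩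
  simp only [emb, Prod.ext_iff, Prod.fst_add, Prod.snd_add, Prod.smul_fst, Prod.smul_snd,
    smul_eq_mul]
  constructor <;> push_cast <;> ring

lemma pairing_emb (ω v : ℤ × ℤ) :
    pairing ω (emb v) = ((ω.1 * v.1 + ω.2 * v.2 : ℤ) : ℝ) := by
  simp only [pairing, emb]; push_cast; ring

lemma finite_latticeIn {P : Set (ℝ × ℝ)} (hb : Bornology.IsBounded P) :
    {v : ℤ × ℤ | emb v ∈ P}.Finite := by
  obtain ⟨r, hr⟩ := hb.subset_closedBall (0 : ℝ × ℝ)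
  apply Set.Finite.subset (Set.finite_Icc (-⌈r⌉, -⌈r⌉) (⌈r⌉, ⌈r⌉))
  intro v hv
  have h1 : ‖emb v‖ ≤ r := by
    have := hr hv
    rwa [Metric.mem_closedBall, dist_zero_right] at this
  rw [Prod.norm_def] at h1
  have hf : |(v.1 : ℝ)| ≤ r := le_trans (le_max_left _ _) h1
  have hs : |(v.2 : ℝ)| ≤ r := le_trans (le_max_right _ _) h1
  have hrc : r ≤ (⌈r⌉ : ℝ) := Int.le_ceil r
  rw [abs_le] at hf hs
  have e1 : (-⌈r⌉ : ℤ) ≤ v.1 := by exact_mod_cast (show -(⌈r⌉:ℝ) ≤ (v.1:ℝ) by linarith [hf.1])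
  have e2 : (-⌈r⌉ : ℤ) ≤ v.2 := by exact_mod_cast (show -(⌈r⌉:ℝ) ≤ (v.2:ℝ) by linarith [hs.1])
  have e3 : v.1 ≤ ⌈r⌉ := by exact_mod_cast (show (v.1:ℝ) ≤ (⌈r⌉:ℝ) by linarith [hf.2])
  have e4 : v.2 ≤ ⌈r⌉ := by exact_mod_cast (show (v.2:ℝ) ≤ (⌈r⌉:ℝ) by linarith [hs.2])
  exact Set.mem_Icc.mpr ⟨Prod.le_def.mpr ⟨e1, e2⟩, Prod.le_def.mpr ⟨e3, e4⟩⟩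

lemma levelHull_isLatticePolytope {P : Set (ℝ × ℝ)} (hb : Bornology.IsBounded P)
    (ω : ℤ × ℤ) (h : ℤ) : IsLatticePolytope (levelHull P ω h) := by
  have hf : {v : ℤ × ℤ | emb v ∈ P ∧ pairing ω (emb v) = (h : ℝ)}.Finite :=
    (finite_latticeIn hb).subset fun v hv => hv.1
  refine ⟨hf.toFinset, ?_⟩
  unfold levelHull
  congr 1
  ext x
  simp only [Set.mem_setOf_eq, Set.mem_image, Set.Finite.coe_toFinset, latticePts, Set.mem_range]
  constructor
  · rintro ⟨hxP, ⟨v, rfl⟩, hpair⟩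
    exact ⟨v, ⟨hxP, hpair⟩, rfl⟩
  · rintro ⟨v, ⟨h1, h2⟩, rfl⟩
    exact ⟨h1, ⟨v, rfl⟩, h2⟩

lemma poly_eq_hull_extreme {V : Finset (ℤ × ℤ)} {P : Set (ℝ × ℝ)}
    (hV : P = convexHull ℝ (emb '' ↑V)) :
    P = convexHull ℝ (Set.extremePoints ℝ P) := by
  subst hV
  have hfin0 : (emb '' (↑V : Set (ℤ × ℤ))).Finite := V.finite_toSet.image emb
  have hcomp : IsCompact (convexHull ℝ (emb '' ↑V)) := hfin0.isCompact_convexHull (𝕜 := ℝ)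
  have hconv : Convex ℝ (convexHull ℝ (emb '' (↑V : Set (ℤ × ℤ)))) := convex_convexHull ℝ _
  have hext := extremePoints_convexHull_subset (𝕜 := ℝ) (A := emb '' (↑V : Set (ℤ × ℤ)))
  have hfin : (Set.extremePoints ℝ (convexHull ℝ (emb '' (↑V : Set (ℤ × ℤ))))).Finite :=
    hfin0.subset hext
  have hclosed : IsClosed (convexHull ℝ
      (Set.extremePoints ℝ (convexHull ℝ (emb '' (↑V : Set (ℤ × ℤ)))))) :=
    hfin.isClosed_convexHull (𝕜 := ℝ)
  have hkm := closure_convexHull_extremePoints hcomp hconv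
  rw [hclosed.closure_eq] at hkm
  exact hkm.symm

end Aux

/-- Mutation is invertible: if `Q = mut_{(ω,F)}(P)` then `P = mut_{(-ω,F)}(Q)`. -/
theorem mutation_invertible (P Q : Set (ℝ × ℝ)) (hP : IsFanoPolygon P)
    (ω vE : ℤ × ℤ) (G : ℤ → Set (ℝ × ℝ))
    (hdata : IsMutationData ω vE G P) (hQ : Q = mutation ω vE G P) :
    ∃ G' : ℤ → Set (ℝ × ℝ), IsMutationData (-ω) vE G' Q ∧ mutation (-ω) vE G' Q = P := by
  obtain ⟨⟨V, hVP⟩, _h0, _hvert⟩ := hP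
  obtain ⟨hωprim, hvEprim, hperp, hG⟩ := hdata
  have hPconv : Convex ℝ P := hVP ▸ convex_convexHull ℝ _
  have hPb : Bornology.IsBounded P :=
    hVP ▸ ((V.finite_toSet.image emb).isCompact_convexHull (𝕜 := ℝ)).isBounded
  have hperpR : pairing ω (emb vE) = 0 := by
    rw [pairing_emb, hperp]; norm_num
  -- the generating set of Q
  set U : Set (ℝ × ℝ) := (⋃ (h : ℤ) (_ : h < 0), G h) ∪
    (⋃ (h : ℤ) (_ : 0 ≤ h), levelHull P ω h + seg ((h : ℝ) • emb vE)) with hU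
  have hQU : Q = convexHull ℝ U := hQ
  have hUQ : U ⊆ Q := hQU ▸ subset_convexHull ℝ U
  -- G pieces lie in P and in the hyperplane at level h
  have hGlevel : ∀ h : ℤ, h < 0 → ∀ x ∈ G h, x ∈ P ∧ pairing ω x = (h : ℝ) := by
    intro h hh x hx
    have hx' : x ∈ G h + seg ((|h| : ℝ) • emb vE) := by
      have := Set.add_mem_add hx (zero_mem_seg ((|h| : ℝ) • emb vE))
      rwa [add_zero] at this
    have hx'' : x ∈ levelHull P ω h := (hG h hh).2.2 hx'
    exact ⟨levelHull_subset hPconv ω h hx'', levelHull_level P ω h hx''⟩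
  -- the key convex "shiftability" set
  set R : Set (ℝ × ℝ) := {x | ∃ α β : ℝ, α ≤ 0 ∧ α ≤ β ∧ -(pairing ω x) ≤ β ∧
    ∀ s : ℝ, α ≤ s → s ≤ β → x + s • emb vE ∈ P} with hR
  have hRconv : Convex ℝ R := by
    intro x hx y hy a b ha hb hab
    obtain ⟨α₁, β₁, hα₁, hαβ₁, hβ₁, hs₁⟩ := hx
    obtain ⟨α₂, β₂, hα₂, hαβ₂, hβ₂, hs₂⟩ := hy
    refine ⟨a * α₁ + b * α₂, a * β₁ + b * β₂, by nlinarith, by nlinarith, ?_, ?_⟩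
    · rw [pairing_add, pairing_smul, pairing_smul]
      nlinarith
    · intro s hsl hsr
      have key : ∀ s₁ s₂ : ℝ, α₁ ≤ s₁ → s₁ ≤ β₁ → α₂ ≤ s₂ → s₂ ≤ β₂ →
          a * s₁ + b * s₂ = s → a • x + b • y + s • emb vE ∈ P := by
        intro s₁ s₂ h11 h12 h21 h22 hcomb
        have m1 : x + s₁ • emb vE ∈ P := hs₁ s₁ h11 h12
        have m2 : y + s₂ • emb vE ∈ P := hs₂ s₂ h21 h22
        have heq : a • (x + s₁ • emb vE) + b • (y + s₂ • emb vE)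
            = a • x + b • y + s • emb vE := by
          have hsv : s • emb vE = (a * s₁) • emb vE + (b * s₂) • emb vE := by
            rw [← add_smul, hcomb]
          rw [smul_add, smul_add, smul_smul, smul_smul, hsv]
          abel
        have := hPconv m1 m2 ha hb hab
        rwa [heq] at this
      rcases eq_or_lt_of_le (show (0:ℝ) ≤ (a * β₁ + b * β₂) - (a * α₁ + b * α₂) by nlinarith)
        with hzero | hpos
      · refine key α₁ α₂ le_rfl hαβ₁ le_rfl hαβ₂ ?_
        have : a * β₁ + b * β₂ = a * α₁ + b * α₂ := by linarith
        linarith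
      · set θ : ℝ := (s - (a * α₁ + b * α₂)) / ((a * β₁ + b * β₂) - (a * α₁ + b * α₂))
          with hθ
        have hθ0 : 0 ≤ θ := div_nonneg (by linarith) hpos.le
        have hθ1 : θ ≤ 1 := (div_le_one hpos).mpr (by linarith)
        refine key (α₁ + θ * (β₁ - α₁)) (α₂ + θ * (β₂ - α₂)) (by nlinarith) (by nlinarith)
          (by nlinarith) (by nlinarith) ?_
        have hmul : θ * ((a * β₁ + b * β₂) - (a * α₁ + b * α₂))
            = s - (a * α₁ + b * α₂) := by
          rw [hθ, div_mul_cancel₀ _ hpos.ne']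
        nlinarith [hmul]
  have hUR : U ⊆ R := by
    intro x hx
    rcases hx with hx | hx
    · obtain ⟨h, hmem⟩ := Set.mem_iUnion.mp hx
      obtain ⟨hh, hxG⟩ := Set.mem_iUnion.mp hmem
      obtain ⟨hxP, hxlev⟩ := hGlevel h hh x hxG
      have hhR : (h : ℝ) < 0 := by exact_mod_cast hh
      have habs : |(h : ℝ)| = -(h : ℝ) := abs_of_neg hhR
      refine ⟨0, -(h : ℝ), le_rfl, by linarith, by rw [hxlev], ?_⟩
      intro s hs0 hsh
      have hmem2 : x + s • emb vE ∈ G h + seg ((|h| : ℝ) • emb vE) := by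
        refine Set.add_mem_add hxG ?_
        rw [habs]
        exact mem_seg_of (emb vE) hs0 hsh
      exact levelHull_subset hPconv ω h ((hG h hh).2.2 hmem2)
    · obtain ⟨k, hmem⟩ := Set.mem_iUnion.mp hx
      obtain ⟨hk, hxA⟩ := Set.mem_iUnion.mp hmem
      obtain ⟨p, hp, u, hu, rfl⟩ := Set.mem_add.mp hxA
      have hkR : (0:ℝ) ≤ (k:ℝ) := by exact_mod_cast hk
      obtain ⟨t, ht0, htk, rfl⟩ := exists_of_mem_seg hkR (emb vE) hu
      have hpP : p ∈ P := levelHull_subset hPconv ω k hp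
      have hplev : pairing ω p = (k:ℝ) := levelHull_level P ω k hp
      refine ⟨-t, -t, by linarith, le_rfl, ?_, ?_⟩
      · rw [pairing_add, pairing_smul, hperpR, hplev]; linarith
      · intro s h1 h2
        have hst : s = -t := le_antisymm h2 h1
        rw [hst]
        have : p + t • emb vE + (-t) • emb vE = p := by
          rw [add_assoc, ← add_smul]; simp
        rw [this]; exact hpP
  have hQR : Q ⊆ R := by rw [hQU]; exact convexHull_min hUR hRconv
  -- lattice points of Q at nonpositive ω-level can be shifted back into P
  have hshiftP : ∀ k : ℤ, 0 ≤ k → ∀ x, x ∈ Q → pairing (-ω) x = (k:ℝ) →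
      x ∈ P ∧ x + (k:ℝ) • emb vE ∈ P := by
    intro k hk x hxQ hxlev
    obtain ⟨α, β, hα, hαβ, hβ, hshift⟩ := hQR hxQ
    have hwx : pairing ω x = -(k:ℝ) := by rw [pairing_neg] at hxlev; linarith
    have hkR : (0:ℝ) ≤ (k:ℝ) := by exact_mod_cast hk
    have hβk : (k:ℝ) ≤ β := by rw [hwx] at hβ; linarith
    constructor
    · have := hshift 0 hα (le_trans hkR hβk)
      rwa [zero_smul, add_zero] at this
    · exact hshift (k:ℝ) (le_trans hα hkR) hβk
  -- (A) pieces of the inverse mutation at nonnegative (-ω)-level lie in P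
  have hA : ∀ k : ℤ, 0 ≤ k → levelHull Q (-ω) k + seg ((k:ℝ) • emb vE) ⊆ P := by
    intro k hk
    have hsum : levelHull Q (-ω) k + seg ((k:ℝ) • emb vE) = convexHull ℝ
        ({x | x ∈ Q ∧ x ∈ latticePts ∧ pairing (-ω) x = ((k:ℤ):ℝ)}
          + {0, (k:ℝ) • emb vE}) := (convexHull_add _ _).symm
    rw [hsum]
    apply convexHull_min _ hPconv
    rintro z hz
    obtain ⟨q, hq, u, hu, rfl⟩ := Set.mem_add.mp hz
    obtain ⟨hqQ, _hqlat, hqlev⟩ := hq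
    have hk2 := hshiftP k hk q hqQ hqlev
    rcases hu with rfl | hu
    · rw [add_zero]; exact hk2.1
    · rw [Set.mem_singleton_iff] at hu
      rw [hu]
      exact hk2.2
  -- (B) shifted positive-level hulls of P land inside lattice level hulls of Q
  have hB : ∀ k : ℤ, 0 ≤ k → levelHull P ω k + seg ((k:ℝ) • emb vE)
      ⊆ levelHull Q (-ω) (-k) := by
    intro k hk
    have hsub : levelHull P ω k + seg ((k:ℝ) • emb vE) ⊆ Q := by
      refine le_trans ?_ hUQ
      intro z hz
      exact Or.inr (Set.mem_iUnion.mpr ⟨k, Set.mem_iUnion.mpr ⟨hk, hz⟩⟩)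
    have hsum : levelHull P ω k + seg ((k:ℝ) • emb vE) = convexHull ℝ
        ({x | x ∈ P ∧ x ∈ latticePts ∧ pairing ω x = ((k:ℤ):ℝ)}
          + {0, (k:ℝ) • emb vE}) := (convexHull_add _ _).symm
    rw [hsum]
    apply convexHull_min _ (convex_convexHull ℝ _)
    rintro z hz
    obtain ⟨p, hp, u, hu, rfl⟩ := Set.mem_add.mp hz
    obtain ⟨hpP, hplat, hplev⟩ := hp
    have hpu : p + u ∈ Q := by
      apply hsub
      refine Set.add_mem_add (subset_convexHull ℝ _ ⟨hpP, hplat, hplev⟩) ?_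
      exact subset_convexHull ℝ _ hu
    apply subset_convexHull ℝ _
    rcases hu with rfl | hu
    · refine ⟨by rwa [add_zero] at hpu ⊢, by rwa [add_zero], ?_⟩
      rw [add_zero, pairing_neg, hplev]; push_cast; ring
    · rw [Set.mem_singleton_iff] at hu
      subst hu
      refine ⟨hpu, lattice_add_smul hplat k vE, ?_⟩
      rw [pairing_neg, pairing_add, pairing_smul, hperpR, hplev]; push_cast; ring
  -- membership helpers for the inverse mutation
  have hmem2 : ∀ k : ℤ, 0 ≤ k → ∀ x, x ∈ levelHull Q (-ω) k + seg ((k:ℝ) • emb vE) →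
      x ∈ mutation (-ω) vE (fun h => levelHull P ω (-h)) Q := by
    intro k hk x hx
    exact subset_convexHull ℝ _ (Or.inr (Set.mem_iUnion.mpr ⟨k, Set.mem_iUnion.mpr ⟨hk, hx⟩⟩))
  have hmem1 : ∀ h : ℤ, h < 0 → ∀ x, x ∈ levelHull P ω (-h) →
      x ∈ mutation (-ω) vE (fun h => levelHull P ω (-h)) Q := by
    intro h hh x hx
    exact subset_convexHull ℝ _ (Or.inl (Set.mem_iUnion.mpr ⟨h, Set.mem_iUnion.mpr ⟨hh, hx⟩⟩))
  refine ⟨fun h => levelHull P ω (-h), ⟨?_, hvEprim, ?_, ?_⟩, ?_⟩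
  · -- primitivity of -ω
    unfold IsPrimitive at hωprim ⊢
    simpa [Int.gcd, Int.natAbs_neg] using hωprim
  · simp only [Prod.fst_neg, Prod.snd_neg]
    linarith [hperp]
  · -- the mutation-data conditions at negative (-ω)-levels
    intro h hh
    have hk : (0:ℤ) ≤ -h := by linarith
    have hhR0 : (h:ℝ) < 0 := by exact_mod_cast hh
    have habs : |(h : ℝ)| = ((-h : ℤ) : ℝ) := by rw [abs_of_neg hhR0]; push_cast; ring
    refine ⟨levelHull_isLatticePolytope hPb ω (-h), ?_, ?_⟩
    · rintro x ⟨hxext, hxlev⟩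
      have hxU : x ∈ U := by
        rw [hQU] at hxext
        exact extremePoints_convexHull_subset hxext
      have hwx : pairing ω x = -(h:ℝ) := by rw [pairing_neg] at hxlev; linarith
      have hhR : (h:ℝ) < 0 := by exact_mod_cast hh
      rcases hxU with hx | hx
      · exfalso
        obtain ⟨m, hmem⟩ := Set.mem_iUnion.mp hx
        obtain ⟨hm, hxG⟩ := Set.mem_iUnion.mp hmem
        have hmR : (m:ℝ) < 0 := by exact_mod_cast hm
        have := (hGlevel m hm x hxG).2
        rw [hwx] at this
        linarith
      · obtain ⟨m, hmem⟩ := Set.mem_iUnion.mp hx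
        obtain ⟨hm, hxA⟩ := Set.mem_iUnion.mp hmem
        obtain ⟨p, hp, u, hu, rfl⟩ := Set.mem_add.mp hxA
        obtain ⟨t, ht0, htm, rfl⟩ :=
          exists_of_mem_seg (by exact_mod_cast hm : (0:ℝ) ≤ (m:ℝ)) (emb vE) hu
        have hlev : pairing ω (p + t • emb vE) = (m:ℝ) := by
          rw [pairing_add, pairing_smul, hperpR, levelHull_level P ω m hp]; ring
        have hmh : m = -h := by
          have : (m:ℝ) = ((-h:ℤ):ℝ) := by rw [← hlev, hwx]; push_cast; ring
          exact_mod_cast this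
        subst hmh
        show p + t • emb vE ∈ levelHull P ω (-h) + seg ((|h| : ℝ) • emb vE)
        rw [habs]
        exact Set.add_mem_add hp (mem_seg_of (emb vE) ht0 htm)
    · show levelHull P ω (-h) + seg ((|h| : ℝ) • emb vE) ⊆ levelHull Q (-ω) h
      rw [habs]
      have := hB (-h) hk
      rwa [neg_neg] at this
  · -- the inverse mutation equals P
    apply Set.Subset.antisymm
    · apply convexHull_min _ hPconv
      apply Set.union_subset
      · intro x hx
        obtain ⟨h, hmem⟩ := Set.mem_iUnion.mp hx
        obtain ⟨hh, hxg⟩ := Set.mem_iUnion.mp hmem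
        exact levelHull_subset hPconv ω (-h) hxg
      · intro x hx
        obtain ⟨k, hmem⟩ := Set.mem_iUnion.mp hx
        obtain ⟨hk, hxp⟩ := Set.mem_iUnion.mp hmem
        exact hA k hk hxp
    · have hfinal : Set.extremePoints ℝ P ⊆ mutation (-ω) vE (fun h => levelHull P ω (-h)) Q := by
        intro v hvext
        have hvP : v ∈ P := extremePoints_subset hvext
        have hvVim : v ∈ emb '' ↑V := by
          rw [hVP] at hvext
          exact extremePoints_convexHull_subset hvext
        obtain ⟨uv, _, rfl⟩ := hvVim
        have hvlat : emb uv ∈ latticePts := ⟨uv, rfl⟩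
        set n : ℤ := ω.1 * uv.1 + ω.2 * uv.2 with hn
        have hwv : pairing ω (emb uv) = (n:ℝ) := pairing_emb ω uv
        rcases lt_trichotomy n 0 with hneg | hzero | hpos
        · -- negative ω-level : use the vertex condition for the original mutation
          have hvG : emb uv ∈ G n + seg ((|n| : ℝ) • emb vE) :=
            (hG n hneg).2.1 ⟨hvext, by rw [hwv]⟩
          obtain ⟨W, hW⟩ := (hG n hneg).1
          have hGQ' : G n ⊆ Q := by
            refine le_trans ?_ hUQ
            intro z hz
            exact Or.inl (Set.mem_iUnion.mpr ⟨n, Set.mem_iUnion.mpr ⟨hneg, hz⟩⟩)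
          have hWsub : emb '' ↑W ⊆
              {x | x ∈ Q ∧ x ∈ latticePts ∧ pairing (-ω) x = ((-n:ℤ):ℝ)} := by
            rintro y hy
            have hyG : y ∈ G n := by rw [hW]; exact subset_convexHull ℝ _ hy
            obtain ⟨wpt, _, rfl⟩ := hy
            refine ⟨hGQ' hyG, ⟨wpt, rfl⟩, ?_⟩
            rw [pairing_neg, (hGlevel n hneg _ hyG).2]; push_cast; ring
          have hGsub : G n ⊆ levelHull Q (-ω) (-n) := by
            rw [hW]
            exact convexHull_mono hWsub
          have hnR : (n:ℝ) < 0 := by exact_mod_cast hneg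
          have habs' : |(n : ℝ)| = ((-n : ℤ) : ℝ) := by rw [abs_of_neg hnR]; push_cast; ring
          obtain ⟨g, hg, u, hu, hsum⟩ := Set.mem_add.mp hvG
          refine hmem2 (-n) (by linarith) _ ?_
          rw [← hsum]
          refine Set.add_mem_add (hGsub hg) ?_
          rwa [habs'] at hu
        · -- level zero
          have hQ0 : emb uv ∈ Q := by
            apply hUQ
            refine Or.inr (Set.mem_iUnion.mpr ⟨0, Set.mem_iUnion.mpr ⟨le_rfl, ?_⟩⟩)
            have : emb uv ∈ levelHull P ω 0 := by
              apply subset_convexHull ℝ _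
              exact ⟨hvP, hvlat, by rw [hwv, hzero]⟩
            have := Set.add_mem_add this (zero_mem_seg (((0:ℤ):ℝ) • emb vE))
            rwa [add_zero] at this
          refine hmem2 0 le_rfl _ ?_
          have hbase : emb uv ∈ levelHull Q (-ω) 0 := by
            apply subset_convexHull ℝ _
            refine ⟨hQ0, hvlat, ?_⟩
            rw [pairing_neg, hwv, hzero]; norm_num
          have := Set.add_mem_add hbase (zero_mem_seg (((0:ℤ):ℝ) • emb vE))
          rwa [add_zero] at this
        · -- positive ω-level : goes into G'
          refine hmem1 (-n) (by linarith) _ ?_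
          rw [neg_neg]
          apply subset_convexHull ℝ _
          exact ⟨hvP, hvlat, by rw [hwv]⟩
      calc P = convexHull ℝ (Set.extremePoints ℝ P) := poly_eq_hull_extreme hVP
        _ ⊆ mutation (-ω) vE (fun h => levelHull P ω (-h)) Q :=
          convexHull_min hfinal (convex_convexHull ℝ _)
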